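/- Under the rank condition, the variance-estimator quantities admit the quadratic-form representations: σ̂² = yᵀΛ₄y, σ̃² = yᵀΛ₃y, σ̃₁² = yᵀΛ₁y, and σ̃₂² = yᵀΛ₂y. -/

import Mathlib

open Matrix

variable {T G k₁ k₂ : ℕ}

/-- Orthogonal projection `P̄[A] = A(AᵀA)⁻¹Aᵀ` onto the column space of `A`. -/
noncomputable def projM {n : Type*} [Fintype n] [DecidableEq n]
    (A : Matrix (Fin T) n ℝ) : Matrix (Fin T) (Fin T) ℝ :=
  A * (Aᵀ * A)⁻¹ * Aᵀ

/-- The annihilator `M̄[A] = I - P̄[A]`. -/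
noncomputable def annM {n : Type*} [Fintype n] [DecidableEq n]
    (A : Matrix (Fin T) n ℝ) : Matrix (Fin T) (Fin T) ℝ :=
  1 - projM A

noncomputable def M1 (X₁ : Matrix (Fin T) (Fin k₁) ℝ) : Matrix (Fin T) (Fin T) ℝ :=
  annM X₁

noncomputable def Pm (X₁ : Matrix (Fin T) (Fin k₁) ℝ) (X₂ : Matrix (Fin T) (Fin k₂) ℝ) :
    Matrix (Fin T) (Fin T) ℝ :=
  projM (fromCols X₁ X₂)

noncomputable def Mm (X₁ : Matrix (Fin T) (Fin k₁) ℝ) (X₂ : Matrix (Fin T) (Fin k₂) ℝ) :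
    Matrix (Fin T) (Fin T) ℝ :=
  annM (fromCols X₁ X₂)

noncomputable def N1 (X₁ : Matrix (Fin T) (Fin k₁) ℝ) (X₂ : Matrix (Fin T) (Fin k₂) ℝ) :
    Matrix (Fin T) (Fin T) ℝ :=
  M1 X₁ * Pm X₁ X₂

noncomputable def B1 (Y : Matrix (Fin T) (Fin G) ℝ) (X₁ : Matrix (Fin T) (Fin k₁) ℝ) :
    Matrix (Fin G) (Fin T) ℝ :=
  (Yᵀ * M1 X₁ * Y)⁻¹ * (Yᵀ * M1 X₁)

noncomputable def B2 (Y : Matrix (Fin T) (Fin G) ℝ) (X₁ : Matrix (Fin T) (Fin k₁) ℝ)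
    (X₂ : Matrix (Fin T) (Fin k₂) ℝ) : Matrix (Fin G) (Fin T) ℝ :=
  (Yᵀ * N1 X₁ X₂ * Y)⁻¹ * (Yᵀ * N1 X₁ X₂)

noncomputable def C1 (Y : Matrix (Fin T) (Fin G) ℝ) (X₁ : Matrix (Fin T) (Fin k₁) ℝ)
    (X₂ : Matrix (Fin T) (Fin k₂) ℝ) : Matrix (Fin G) (Fin T) ℝ :=
  B2 Y X₁ X₂ - B1 Y X₁

/-- OLS estimator `β̂`. -/
noncomputable def betaOLS (y : Fin T → ℝ) (Y : Matrix (Fin T) (Fin G) ℝ)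
    (X₁ : Matrix (Fin T) (Fin k₁) ℝ) : Fin G → ℝ :=
  B1 Y X₁ *ᵥ y

/-- 2SLS estimator `β̃`. -/
noncomputable def beta2S (y : Fin T → ℝ) (Y : Matrix (Fin T) (Fin G) ℝ)
    (X₁ : Matrix (Fin T) (Fin k₁) ℝ) (X₂ : Matrix (Fin T) (Fin k₂) ℝ) : Fin G → ℝ :=
  B2 Y X₁ X₂ *ᵥ y

noncomputable def OmIV (Y : Matrix (Fin T) (Fin G) ℝ) (X₁ : Matrix (Fin T) (Fin k₁) ℝ)
    (X₂ : Matrix (Fin T) (Fin k₂) ℝ) : Matrix (Fin G) (Fin G) ℝ :=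
  (T : ℝ)⁻¹ • (Yᵀ * N1 X₁ X₂ * Y)

noncomputable def OmLS (Y : Matrix (Fin T) (Fin G) ℝ) (X₁ : Matrix (Fin T) (Fin k₁) ℝ) :
    Matrix (Fin G) (Fin G) ℝ :=
  (T : ℝ)⁻¹ • (Yᵀ * M1 X₁ * Y)

noncomputable def SigV (Y : Matrix (Fin T) (Fin G) ℝ) (X₁ : Matrix (Fin T) (Fin k₁) ℝ)
    (X₂ : Matrix (Fin T) (Fin k₂) ℝ) : Matrix (Fin G) (Fin G) ℝ :=
  (T : ℝ)⁻¹ • (Yᵀ * Mm X₁ X₂ * Y)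

noncomputable def Dhat (Y : Matrix (Fin T) (Fin G) ℝ) (X₁ : Matrix (Fin T) (Fin k₁) ℝ)
    (X₂ : Matrix (Fin T) (Fin k₂) ℝ) : Matrix (Fin G) (Fin G) ℝ :=
  (OmIV Y X₁ X₂)⁻¹ - (OmLS Y X₁)⁻¹

noncomputable def Psi0 (Y : Matrix (Fin T) (Fin G) ℝ) (X₁ : Matrix (Fin T) (Fin k₁) ℝ)
    (X₂ : Matrix (Fin T) (Fin k₂) ℝ) : Matrix (Fin T) (Fin T) ℝ :=
  (C1 Y X₁ X₂)ᵀ * (Dhat Y X₁ X₂)⁻¹ * C1 Y X₁ X₂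

noncomputable def N2 (Y : Matrix (Fin T) (Fin G) ℝ) (X₁ : Matrix (Fin T) (Fin k₁) ℝ)
    (X₂ : Matrix (Fin T) (Fin k₂) ℝ) : Matrix (Fin T) (Fin T) ℝ :=
  1 - M1 X₁ * Y * B2 Y X₁ X₂

noncomputable def Lam1 (Y : Matrix (Fin T) (Fin G) ℝ) (X₁ : Matrix (Fin T) (Fin k₁) ℝ)
    (X₂ : Matrix (Fin T) (Fin k₂) ℝ) : Matrix (Fin T) (Fin T) ℝ :=
  (T : ℝ)⁻¹ • (N1 X₁ X₂ * annM (N1 X₁ X₂ * Y) * N1 X₁ X₂)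

noncomputable def Lam2 (Y : Matrix (Fin T) (Fin G) ℝ) (X₁ : Matrix (Fin T) (Fin k₁) ℝ)
    (X₂ : Matrix (Fin T) (Fin k₂) ℝ) : Matrix (Fin T) (Fin T) ℝ :=
  M1 X₁ * ((T : ℝ)⁻¹ • annM (M1 X₁ * Y) - Psi0 Y X₁ X₂) * M1 X₁

noncomputable def Lam3 (Y : Matrix (Fin T) (Fin G) ℝ) (X₁ : Matrix (Fin T) (Fin k₁) ℝ)
    (X₂ : Matrix (Fin T) (Fin k₂) ℝ) : Matrix (Fin T) (Fin T) ℝ :=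
  (T : ℝ)⁻¹ • (M1 X₁ * (N2 Y X₁ X₂)ᵀ * N2 Y X₁ X₂ * M1 X₁)

noncomputable def Lam4 (Y : Matrix (Fin T) (Fin G) ℝ) (X₁ : Matrix (Fin T) (Fin k₁) ℝ) :
    Matrix (Fin T) (Fin T) ℝ :=
  (T : ℝ)⁻¹ • (M1 X₁ * annM (M1 X₁ * Y) * M1 X₁)

def Ybar (Y : Matrix (Fin T) (Fin G) ℝ) (X₁ : Matrix (Fin T) (Fin k₁) ℝ) :
    Matrix (Fin T) (Fin G ⊕ Fin k₁) ℝ :=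
  fromCols Y X₁

def Zfull (Y : Matrix (Fin T) (Fin G) ℝ) (X₁ : Matrix (Fin T) (Fin k₁) ℝ)
    (X₂ : Matrix (Fin T) (Fin k₂) ℝ) : Matrix (Fin T) (Fin G ⊕ (Fin k₁ ⊕ Fin k₂)) ℝ :=
  fromCols Y (fromCols X₁ X₂)

noncomputable def PsiR (Y : Matrix (Fin T) (Fin G) ℝ) (X₁ : Matrix (Fin T) (Fin k₁) ℝ)
    (X₂ : Matrix (Fin T) (Fin k₂) ℝ) : Matrix (Fin T) (Fin T) ℝ :=
  (T : ℝ)⁻¹ • (annM (Ybar Y X₁) - annM (Zfull Y X₁ X₂))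

noncomputable def LamR (Y : Matrix (Fin T) (Fin G) ℝ) (X₁ : Matrix (Fin T) (Fin k₁) ℝ)
    (X₂ : Matrix (Fin T) (Fin k₂) ℝ) : Matrix (Fin T) (Fin T) ℝ :=
  (T : ℝ)⁻¹ • annM (Zfull Y X₁ X₂)

/-- `σ̂² = (1/T)(y−Yβ̂)ᵀM₁(y−Yβ̂)`. -/
noncomputable def sigHat2 (y : Fin T → ℝ) (Y : Matrix (Fin T) (Fin G) ℝ)
    (X₁ : Matrix (Fin T) (Fin k₁) ℝ) : ℝ :=
  (T : ℝ)⁻¹ * ((y - Y *ᵥ betaOLS y Y X₁) ⬝ᵥ (M1 X₁ *ᵥ (y - Y *ᵥ betaOLS y Y X₁)))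

/-- `σ̃² = (1/T)(y−Yβ̃)ᵀM₁(y−Yβ̃)`. -/
noncomputable def sigTil2 (y : Fin T → ℝ) (Y : Matrix (Fin T) (Fin G) ℝ)
    (X₁ : Matrix (Fin T) (Fin k₁) ℝ) (X₂ : Matrix (Fin T) (Fin k₂) ℝ) : ℝ :=
  (T : ℝ)⁻¹ * ((y - Y *ᵥ beta2S y Y X₁ X₂) ⬝ᵥ (M1 X₁ *ᵥ (y - Y *ᵥ beta2S y Y X₁ X₂)))

/-- `σ̃₁² = (1/T)(y−Yβ̃)ᵀN₁(y−Yβ̃)`. -/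
noncomputable def sigTil1sq (y : Fin T → ℝ) (Y : Matrix (Fin T) (Fin G) ℝ)
    (X₁ : Matrix (Fin T) (Fin k₁) ℝ) (X₂ : Matrix (Fin T) (Fin k₂) ℝ) : ℝ :=
  (T : ℝ)⁻¹ * ((y - Y *ᵥ beta2S y Y X₁ X₂) ⬝ᵥ (N1 X₁ X₂ *ᵥ (y - Y *ᵥ beta2S y Y X₁ X₂)))

/-- `σ̃₂² = σ̂² − (β̃−β̂)ᵀΔ̂⁻¹(β̃−β̂)`. -/
noncomputable def sigTil2sq (y : Fin T → ℝ) (Y : Matrix (Fin T) (Fin G) ℝ)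
    (X₁ : Matrix (Fin T) (Fin k₁) ℝ) (X₂ : Matrix (Fin T) (Fin k₂) ℝ) : ℝ :=
  sigHat2 y Y X₁ -
    (beta2S y Y X₁ X₂ - betaOLS y Y X₁) ⬝ᵥ
      ((Dhat Y X₁ X₂)⁻¹ *ᵥ (beta2S y Y X₁ X₂ - betaOLS y Y X₁))

/-- The rank condition: `X₁`, `X = [X₁, X₂]`, `[Y, X]` and `[P̄[X]Y, X₁]` all have
full column rank. -/
def RankCond (Y : Matrix (Fin T) (Fin G) ℝ) (X₁ : Matrix (Fin T) (Fin k₁) ℝ)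
    (X₂ : Matrix (Fin T) (Fin k₂) ℝ) : Prop :=
  X₁.rank = k₁ ∧ (fromCols X₁ X₂).rank = k₁ + k₂ ∧
    (fromCols Y (fromCols X₁ X₂)).rank = G + (k₁ + k₂) ∧
    (fromCols (Pm X₁ X₂ * Y) X₁).rank = G + k₁

/-!
Residuals are linear in `y`, `y - Yβ = (I - Y B) y`, so each estimator is the quadratic form of
`(I - Y B)ᵀ Q (I - Y B)` for its weight `Q` and coefficient map `B`. If `Q` is a symmetric
idempotent and `B = (YᵀQY)⁻¹YᵀQ`, then `Q (I - Y B) = M̄[QY] Q`, so this sandwich collapses to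
`Q M̄[QY] Q`: with `Q = M₁` that is `Λ₄`, with `Q = N₁` it is `Λ₁`. For `σ̃²` the weight `M₁` is
not the one of `B₂`, but `B₂ M₁ = B₂` still gives `M₁ (I - Y B₂) = N₂ M₁`, whence `Λ₃`; and
`β̃ - β̂ = C₁ y` with `C₁ M₁ = C₁` turns `σ̃₂²` into `yᵀΛ₂y`. The rank condition makes `M₁` and
`P̄[X]` commuting orthogonal projections (so `N₁` is one too) and `M₁Y`, `N₁Y` injective.
-/

open Function

namespace Matrix

section Rank

variable {K : Type*} [Field K] {m n : Type*} [Fintype n]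

theorem mulVec_injective_of_rank_eq_card {A : Matrix m n K} (h : A.rank = Fintype.card n) :
    Injective A.mulVec := by
  have hker : Module.finrank K (LinearMap.ker A.mulVecLin) = 0 := by
    have := LinearMap.finrank_range_add_finrank_ker A.mulVecLin
    rw [Module.finrank_fintype_fun_eq_card] at this
    rw [rank] at h
    omega
  rw [← coe_mulVecLin, ← LinearMap.ker_eq_bot]
  exact Submodule.finrank_eq_zero.mp hker

theorem isUnit_transpose_mul_self_of_mulVec_injective [LinearOrder K] [IsStrictOrderedRing K]
    [Fintype m] [DecidableEq n] {A : Matrix m n K} (h : Injective A.mulVec) : IsUnit (Aᵀ * A) := by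
  rw [← mulVec_injective_iff_isUnit, ← coe_mulVecLin, ← LinearMap.ker_eq_bot,
    ker_mulVecLin_transpose_mul_self, LinearMap.ker_eq_bot, coe_mulVecLin]
  exact h

theorem eq_zero_of_mulVec_eq_of_fromCols {n' : Type*} [Fintype n'] {A : Matrix m n K}
    {B : Matrix m n' K} (h : Injective (fromCols A B).mulVec) {v : n → K} {w : n' → K}
    (hvw : A *ᵥ v = B *ᵥ w) : v = 0 := by
  have : Sum.elim v (-w) = 0 :=
    h (by rw [fromCols_mulVec_sumElim, mulVec_neg, hvw, add_neg_cancel, mulVec_zero])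
  rw [← Sum.elim_zero_zero, Sum.elim_eq_iff] at this
  exact this.1

end Rank

section SymmIdempotent

variable {R : Type*} [CommRing R] {l : Type*} [Fintype l] {Q : Matrix l l R}

theorem transpose_mul_mul_self_of_isSymm_of_isIdempotentElem (hQs : Q.IsSymm)
    (hQi : IsIdempotentElem Q) {m : Type*} [Fintype m] (Z : Matrix l m R) :
    (Q * Z)ᵀ * (Q * Z) = Zᵀ * Q * Z := by
  rw [transpose_mul, hQs.eq, Matrix.mul_assoc, ← Matrix.mul_assoc Q, hQi.eq, Matrix.mul_assoc]

theorem transpose_mul_mul_eq_of_mul_eq (hQs : Q.IsSymm) (hQi : IsIdempotentElem Q)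
    {D F : Matrix l l R} (h : Q * D = F * Q) : Dᵀ * Q * D = Q * Fᵀ * F * Q := by
  calc Dᵀ * Q * D = (Q * D)ᵀ * (Q * D) :=
        (transpose_mul_mul_self_of_isSymm_of_isIdempotentElem hQs hQi D).symm
    _ = Q * Fᵀ * F * Q := by rw [h, transpose_mul, hQs.eq, Matrix.mul_assoc, Matrix.mul_assoc,
        Matrix.mul_assoc]

theorem transpose_mul_mul_eq_of_mul_eq_of_isSymm (hQs : Q.IsSymm) (hQi : IsIdempotentElem Q)
    {D F : Matrix l l R} (hFs : F.IsSymm) (hFi : IsIdempotentElem F)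
    (h : Q * D = F * Q) : Dᵀ * Q * D = Q * F * Q := by
  rw [transpose_mul_mul_eq_of_mul_eq hQs hQi h, hFs.eq, Matrix.mul_assoc Q, hFi.eq]

end SymmIdempotent

theorem dotProduct_mulVec_mulVec_eq {R : Type*} [CommSemiring R] {m n : Type*} [Fintype m]
    [Fintype n] (A : Matrix m n R) (M : Matrix m m R) (y : n → R) :
    (A *ᵥ y) ⬝ᵥ (M *ᵥ (A *ᵥ y)) = y ⬝ᵥ ((Aᵀ * M * A) *ᵥ y) := by
  rw [mulVec_mulVec, dotProduct_mulVec, dotProduct_mulVec, ← vecMul_transpose, vecMul_vecMul,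
    Matrix.mul_assoc]

theorem mul_residual_dotProduct {R : Type*} [CommRing R] {l m : Type*} [Fintype l]
    [DecidableEq l] [Fintype m] (c : R) (y : l → R) (Z : Matrix l m R) (B : Matrix m l R)
    (Q : Matrix l l R) :
    c * ((y - Z *ᵥ (B *ᵥ y)) ⬝ᵥ (Q *ᵥ (y - Z *ᵥ (B *ᵥ y)))) =
      y ⬝ᵥ ((c • ((1 - Z * B)ᵀ * Q * (1 - Z * B))) *ᵥ y) := by
  rw [smul_mulVec, dotProduct_smul, smul_eq_mul, ← dotProduct_mulVec_mulVec_eq, sub_mulVec,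
    one_mulVec, mulVec_mulVec]

end Matrix

section Projection

variable {n : Type*} [Fintype n] [DecidableEq n]

theorem projM_isSymm (A : Matrix (Fin T) n ℝ) : (projM A).IsSymm := by
  simp [IsSymm, projM, transpose_mul, transpose_nonsing_inv, Matrix.mul_assoc]

theorem projM_mul_self {A : Matrix (Fin T) n ℝ} (hA : IsUnit (Aᵀ * A)) : projM A * A = A := by
  rw [projM, Matrix.mul_assoc, Matrix.mul_assoc,
    nonsing_inv_mul _ ((isUnit_iff_isUnit_det _).mp hA), Matrix.mul_one]

theorem isIdempotentElem_projM {A : Matrix (Fin T) n ℝ} (hA : IsUnit (Aᵀ * A)) :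
    IsIdempotentElem (projM A) := by
  rw [IsIdempotentElem]
  nth_rw 2 [projM]
  rw [← Matrix.mul_assoc, ← Matrix.mul_assoc, projM_mul_self hA, projM]

theorem annM_isSymm (A : Matrix (Fin T) n ℝ) : (annM A).IsSymm := by
  simp [IsSymm, annM, (projM_isSymm A).eq]

theorem isIdempotentElem_annM {A : Matrix (Fin T) n ℝ} (hA : IsUnit (Aᵀ * A)) :
    IsIdempotentElem (annM A) :=
  (isIdempotentElem_projM hA).one_sub

theorem annM_mul_mulVec_injective {m : Type*} [Fintype m] {A : Matrix (Fin T) n ℝ}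
    {Z : Matrix (Fin T) m ℝ} (h : ∀ v w, Z *ᵥ v = A *ᵥ w → v = 0) :
    Injective (annM A * Z).mulVec := by
  intro u u' huu'
  rw [← sub_eq_zero]
  refine h _ (((Aᵀ * A)⁻¹ * Aᵀ) *ᵥ (Z *ᵥ (u - u'))) ?_
  have hfix : Z *ᵥ (u - u') = projM A *ᵥ (Z *ᵥ (u - u')) := by
    have : annM A *ᵥ (Z *ᵥ (u - u')) = 0 := by
      rw [mulVec_mulVec, mulVec_sub, huu', sub_self]
    rwa [annM, sub_mulVec, one_mulVec, sub_eq_zero] at this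
  rwa [projM, Matrix.mul_assoc, ← mulVec_mulVec] at hfix

end Projection

section ResidualMaker

variable {Q : Matrix (Fin T) (Fin T) ℝ}
variable {m : Type*} [Fintype m] [DecidableEq m]

theorem mul_one_sub_mul_inv_eq_annM_mul (hQs : Q.IsSymm) (hQi : IsIdempotentElem Q)
    (Z : Matrix (Fin T) m ℝ) :
    Q * (1 - Z * ((Zᵀ * Q * Z)⁻¹ * (Zᵀ * Q))) = annM (Q * Z) * Q := by
  rw [annM, projM, transpose_mul_mul_self_of_isSymm_of_isIdempotentElem hQs hQi,
    transpose_mul, hQs.eq]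
  simp only [Matrix.mul_sub, Matrix.sub_mul, Matrix.mul_one, Matrix.one_mul, Matrix.mul_assoc,
    hQi.eq]

theorem residual_sandwich (hQs : Q.IsSymm) (hQi : IsIdempotentElem Q)
    {Z : Matrix (Fin T) m ℝ} (hZ : Injective (Q * Z).mulVec) :
    (1 - Z * ((Zᵀ * Q * Z)⁻¹ * (Zᵀ * Q)))ᵀ * Q * (1 - Z * ((Zᵀ * Q * Z)⁻¹ * (Zᵀ * Q))) =
      Q * annM (Q * Z) * Q :=
  transpose_mul_mul_eq_of_mul_eq_of_isSymm hQs hQi (annM_isSymm _)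
    (isIdempotentElem_annM (isUnit_transpose_mul_self_of_mulVec_injective hZ))
    (mul_one_sub_mul_inv_eq_annM_mul hQs hQi Z)

end ResidualMaker

section Model

variable {Y : Matrix (Fin T) (Fin G) ℝ} {X₁ : Matrix (Fin T) (Fin k₁) ℝ}
  {X₂ : Matrix (Fin T) (Fin k₂) ℝ}

theorem M1_isSymm (X₁ : Matrix (Fin T) (Fin k₁) ℝ) : (M1 X₁).IsSymm :=
  annM_isSymm X₁

theorem isIdempotentElem_M1 (hX₁ : IsUnit (X₁ᵀ * X₁)) : IsIdempotentElem (M1 X₁) :=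
  isIdempotentElem_annM hX₁

theorem Pm_mul_projM (hX : IsUnit ((fromCols X₁ X₂)ᵀ * fromCols X₁ X₂)) :
    Pm X₁ X₂ * projM X₁ = projM X₁ := by
  have hPX₁ : Pm X₁ X₂ * X₁ = X₁ := by
    have := projM_mul_self hX
    rw [mul_fromCols] at this
    exact (fromCols_inj this).1
  rw [projM, ← Matrix.mul_assoc, ← Matrix.mul_assoc, hPX₁]

theorem commute_M1_Pm (hX : IsUnit ((fromCols X₁ X₂)ᵀ * fromCols X₁ X₂)) :
    Commute (M1 X₁) (Pm X₁ X₂) := by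
  have hP₁P : projM X₁ * Pm X₁ X₂ = projM X₁ := by
    have := congrArg transpose (Pm_mul_projM hX)
    rwa [transpose_mul, (projM_isSymm X₁).eq, Pm, (projM_isSymm _).eq] at this
  rw [Commute, SemiconjBy, M1, annM, Matrix.sub_mul, Matrix.mul_sub, hP₁P, Pm_mul_projM hX,
    Matrix.one_mul, Matrix.mul_one]

theorem isIdempotentElem_N1 (hX₁ : IsUnit (X₁ᵀ * X₁))
    (hX : IsUnit ((fromCols X₁ X₂)ᵀ * fromCols X₁ X₂)) : IsIdempotentElem (N1 X₁ X₂) :=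
  IsIdempotentElem.mul_of_commute (commute_M1_Pm hX) (isIdempotentElem_M1 hX₁)
    (isIdempotentElem_projM hX)

theorem N1_isSymm (hX : IsUnit ((fromCols X₁ X₂)ᵀ * fromCols X₁ X₂)) : (N1 X₁ X₂).IsSymm := by
  rw [IsSymm, N1, transpose_mul, Pm, (projM_isSymm _).eq, (M1_isSymm X₁).eq]
  exact (commute_M1_Pm hX).eq.symm

theorem N1_mul_M1 (hX₁ : IsUnit (X₁ᵀ * X₁)) (hX : IsUnit ((fromCols X₁ X₂)ᵀ * fromCols X₁ X₂)) :
    N1 X₁ X₂ * M1 X₁ = N1 X₁ X₂ := by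
  rw [N1, Matrix.mul_assoc, ← (commute_M1_Pm hX).eq, ← Matrix.mul_assoc,
    (isIdempotentElem_M1 hX₁).eq]

theorem B1_mul_M1 (hX₁ : IsUnit (X₁ᵀ * X₁)) : B1 Y X₁ * M1 X₁ = B1 Y X₁ := by
  rw [B1, Matrix.mul_assoc _ (Yᵀ * M1 X₁), Matrix.mul_assoc Yᵀ (M1 X₁) (M1 X₁),
    (isIdempotentElem_M1 hX₁).eq]

theorem B2_mul_M1 (hX₁ : IsUnit (X₁ᵀ * X₁)) (hX : IsUnit ((fromCols X₁ X₂)ᵀ * fromCols X₁ X₂)) :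
    B2 Y X₁ X₂ * M1 X₁ = B2 Y X₁ X₂ := by
  rw [B2, Matrix.mul_assoc _ (Yᵀ * N1 X₁ X₂), Matrix.mul_assoc Yᵀ (N1 X₁ X₂) (M1 X₁),
    N1_mul_M1 hX₁ hX]

theorem mulVec_injective_M1_mul (h : Injective (fromCols Y (fromCols X₁ X₂)).mulVec) :
    Injective (M1 X₁ * Y).mulVec :=
  annM_mul_mulVec_injective fun _ w hvw => eq_zero_of_mulVec_eq_of_fromCols h (w := Sum.elim w 0)
    (by rw [fromCols_mulVec_sumElim, mulVec_zero, add_zero, hvw])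

theorem mulVec_injective_N1_mul (h : Injective (fromCols (Pm X₁ X₂ * Y) X₁).mulVec) :
    Injective (N1 X₁ X₂ * Y).mulVec := by
  rw [N1, Matrix.mul_assoc]
  exact annM_mul_mulVec_injective fun _ _ => eq_zero_of_mulVec_eq_of_fromCols h

variable (y : Fin T → ℝ)

theorem sigHat2_eq_Lam4 (hX₁ : IsUnit (X₁ᵀ * X₁)) (hY : Injective (M1 X₁ * Y).mulVec) :
    sigHat2 y Y X₁ = y ⬝ᵥ (Lam4 Y X₁ *ᵥ y) := by
  rw [sigHat2, betaOLS, mul_residual_dotProduct, B1,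
    residual_sandwich (M1_isSymm X₁) (isIdempotentElem_M1 hX₁) hY, Lam4]

theorem sigTil2_eq_Lam3 (hX₁ : IsUnit (X₁ᵀ * X₁))
    (hX : IsUnit ((fromCols X₁ X₂)ᵀ * fromCols X₁ X₂)) :
    sigTil2 y Y X₁ X₂ = y ⬝ᵥ (Lam3 Y X₁ X₂ *ᵥ y) := by
  have hN₂ : M1 X₁ * (1 - Y * B2 Y X₁ X₂) = N2 Y X₁ X₂ * M1 X₁ := by
    rw [N2, Matrix.mul_sub, Matrix.sub_mul, Matrix.mul_one, Matrix.one_mul,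
      Matrix.mul_assoc (M1 X₁ * Y), B2_mul_M1 hX₁ hX, Matrix.mul_assoc]
  rw [sigTil2, beta2S, mul_residual_dotProduct,
    transpose_mul_mul_eq_of_mul_eq (M1_isSymm X₁) (isIdempotentElem_M1 hX₁) hN₂, Lam3]

theorem sigTil1sq_eq_Lam1 (hX₁ : IsUnit (X₁ᵀ * X₁))
    (hX : IsUnit ((fromCols X₁ X₂)ᵀ * fromCols X₁ X₂)) (hNY : Injective (N1 X₁ X₂ * Y).mulVec) :
    sigTil1sq y Y X₁ X₂ = y ⬝ᵥ (Lam1 Y X₁ X₂ *ᵥ y) := by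
  rw [sigTil1sq, beta2S, mul_residual_dotProduct, B2,
    residual_sandwich (N1_isSymm hX) (isIdempotentElem_N1 hX₁ hX) hNY, Lam1]

theorem sigTil2sq_eq_Lam2 (hX₁ : IsUnit (X₁ᵀ * X₁))
    (hX : IsUnit ((fromCols X₁ X₂)ᵀ * fromCols X₁ X₂)) (hY : Injective (M1 X₁ * Y).mulVec) :
    sigTil2sq y Y X₁ X₂ = y ⬝ᵥ (Lam2 Y X₁ X₂ *ᵥ y) := by
  have hC : C1 Y X₁ X₂ * M1 X₁ = C1 Y X₁ X₂ := by
    rw [C1, Matrix.sub_mul, B1_mul_M1 hX₁, B2_mul_M1 hX₁ hX]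
  have hLam2 : Lam2 Y X₁ X₂ = Lam4 Y X₁ - (C1 Y X₁ X₂)ᵀ * (Dhat Y X₁ X₂)⁻¹ * C1 Y X₁ X₂ := by
    have hCt : M1 X₁ * (C1 Y X₁ X₂)ᵀ = (C1 Y X₁ X₂)ᵀ := by
      rw [← (M1_isSymm X₁).eq, ← transpose_mul, hC]
    rw [Lam2, Lam4, Psi0, Matrix.mul_sub, Matrix.sub_mul, Matrix.mul_smul, Matrix.smul_mul,
      ← Matrix.mul_assoc, ← Matrix.mul_assoc, hCt, Matrix.mul_assoc _ (C1 Y X₁ X₂), hC]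
  have hβ : beta2S y Y X₁ X₂ - betaOLS y Y X₁ = C1 Y X₁ X₂ *ᵥ y := by
    rw [C1, sub_mulVec, beta2S, betaOLS]
  rw [sigTil2sq, sigHat2_eq_Lam4 y hX₁ hY, hβ, dotProduct_mulVec_mulVec_eq, hLam2, sub_mulVec,
    dotProduct_sub]

end Model

theorem stmt8_general {T G k₁ k₂ : ℕ}
    (y : Fin T → ℝ) (Y : Matrix (Fin T) (Fin G) ℝ)
    (X₁ : Matrix (Fin T) (Fin k₁) ℝ) (X₂ : Matrix (Fin T) (Fin k₂) ℝ)
    (hrank : RankCond Y X₁ X₂) :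
    sigHat2 y Y X₁ = y ⬝ᵥ (Lam4 Y X₁ *ᵥ y) ∧
    sigTil2 y Y X₁ X₂ = y ⬝ᵥ (Lam3 Y X₁ X₂ *ᵥ y) ∧
    sigTil1sq y Y X₁ X₂ = y ⬝ᵥ (Lam1 Y X₁ X₂ *ᵥ y) ∧
    sigTil2sq y Y X₁ X₂ = y ⬝ᵥ (Lam2 Y X₁ X₂ *ᵥ y) := by
  obtain ⟨hrX₁, hrX, hrYX, hrPYX₁⟩ := hrank
  have hX₁ : IsUnit (X₁ᵀ * X₁) := isUnit_transpose_mul_self_of_mulVec_injective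
    (mulVec_injective_of_rank_eq_card (by simpa using hrX₁))
  have hX : IsUnit ((fromCols X₁ X₂)ᵀ * fromCols X₁ X₂) :=
    isUnit_transpose_mul_self_of_mulVec_injective
      (mulVec_injective_of_rank_eq_card (by simpa using hrX))
  have hY : Injective (M1 X₁ * Y).mulVec :=
    mulVec_injective_M1_mul (mulVec_injective_of_rank_eq_card (by simpa using hrYX))
  have hNY : Injective (N1 X₁ X₂ * Y).mulVec :=
    mulVec_injective_N1_mul (mulVec_injective_of_rank_eq_card (by simpa using hrPYX₁))
  exact ⟨sigHat2_eq_Lam4 y hX₁ hY, sigTil2_eq_Lam3 y hX₁ hX, sigTil1sq_eq_Lam1 y hX₁ hX hNY,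
    sigTil2sq_eq_Lam2 y hX₁ hX hY⟩

/-- Under the rank condition, the variance-estimator quantities admit the quadratic-form
representations `σ̂² = yᵀΛ₄y`, `σ̃² = yᵀΛ₃y`, `σ̃₁² = yᵀΛ₁y`, and `σ̃₂² = yᵀΛ₂y`. -/
theorem stmt8 {T G k₁ k₂ : ℕ}
    (hT : 0 < T) (hG : 0 < G) (hk₁ : 0 < k₁) (hk₂ : 0 < k₂)
    (y : Fin T → ℝ) (Y : Matrix (Fin T) (Fin G) ℝ)
    (X₁ : Matrix (Fin T) (Fin k₁) ℝ) (X₂ : Matrix (Fin T) (Fin k₂) ℝ)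
    (hrank : RankCond Y X₁ X₂) :
    sigHat2 y Y X₁ = y ⬝ᵥ (Lam4 Y X₁ *ᵥ y) ∧
    sigTil2 y Y X₁ X₂ = y ⬝ᵥ (Lam3 Y X₁ X₂ *ᵥ y) ∧
    sigTil1sq y Y X₁ X₂ = y ⬝ᵥ (Lam1 Y X₁ X₂ *ᵥ y) ∧
    sigTil2sq y Y X₁ X₂ = y ⬝ᵥ (Lam2 Y X₁ X₂ *ᵥ y) :=
  stmt8_general y Y X₁ X₂ hrank
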